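/- Let n₁, n₂ ≥ 1. The number of acyclic orientations of the complete bipartite graph K_{n₁,n₂} equals the number of n₁×n₂ lonesum matrices. -/
import Mathlib


/-- An orientation of a simple graph `G`, encoded as a function `f` where `f u v = true`
means the edge `{u,v}` is directed from `u` to `v`. Every edge gets exactly one direction,
and non-edges carry no direction. -/
def IsOrientation {V : Type*} (G : SimpleGraph V) (f : V → V → Bool) : Prop :=
  (∀ u v, G.Adj u v → f u v = !f v u) ∧ ∀ u v, ¬ G.Adj u v → f u v = false

/-- The directed graph given by `f` contains no directed cycle. -/
def OrientAcyclic {V : Type*} (f : V → V → Bool) : Prop :=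
  ∀ v, ¬ Relation.TransGen (fun a b => f a b = true) v v

/-- The number of acyclic orientations of `G`. -/
noncomputable def numAcyclicOrientations {V : Type*} (G : SimpleGraph V) : ℕ :=
  Nat.card {f : V → V → Bool // IsOrientation G f ∧ OrientAcyclic f}

/-- The Stirling number of the second kind `S(n,k)`: the number of partitions of an
`n`-element set into `k` non-empty parts. -/
noncomputable def stirling2 (n k : ℕ) : ℕ :=
  Nat.card {P : Finpartition (Finset.univ : Finset (Fin n)) // P.parts.card = k}

/-- The row sum of a zero-one (Boolean) matrix: the number of `true` entries in row `i`. -/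
def rowSum {m n : ℕ} (M : Fin m → Fin n → Bool) (i : Fin m) : ℕ :=
  (Finset.univ.filter fun j => M i j = true).card

/-- The column sum of a zero-one (Boolean) matrix: the number of `true` entries in column `j`. -/
def colSum {m n : ℕ} (M : Fin m → Fin n → Bool) (j : Fin n) : ℕ :=
  (Finset.univ.filter fun i => M i j = true).card

/-- A zero-one matrix is lonesum if it is the unique zero-one matrix with its row sums and
column sums. -/
def IsLonesum {m n : ℕ} (M : Fin m → Fin n → Bool) : Prop :=
  ∀ N : Fin m → Fin n → Bool,
    (∀ i, rowSum N i = rowSum M i) → (∀ j, colSum N j = colSum M j) → N = M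

open Finset

section Aux

variable {n₁ n₂ : ℕ}

/-- The forbidden 2×2 pattern. -/
def HasPattern {m n : ℕ} (M : Fin m → Fin n → Bool) : Prop :=
  ∃ i i' j j', M i j = true ∧ M i j' = false ∧ M i' j' = true ∧ M i' j = false

lemma row_subset {M : Fin n₁ → Fin n₂ → Bool} (hM : ¬ HasPattern M) {i i' : Fin n₁}
    {j : Fin n₂} (h1 : M i j = true) (h2 : M i' j = false) :
    ∀ j', M i' j' = true → M i j' = true := by
  intro j' h3
  by_contra h4
  exact hM ⟨i, i', j, j', h1, by simpa using h4, h3, h2⟩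

lemma rowSum_lt {M : Fin n₁ → Fin n₂ → Bool} (hM : ¬ HasPattern M) {i i' : Fin n₁}
    {j : Fin n₂} (h1 : M i j = true) (h2 : M i' j = false) :
    rowSum M i' < rowSum M i := by
  apply Finset.card_lt_card
  rw [Finset.ssubset_iff_of_subset]
  · exact ⟨j, by simp [h1], by simp [h2]⟩
  · intro b hb
    simp only [mem_filter, mem_univ, true_and] at hb ⊢
    exact row_subset hM h1 h2 b hb

lemma rowSum_le (M : Fin n₁ → Fin n₂ → Bool) (i : Fin n₁) : rowSum M i ≤ n₂ := by
  rw [rowSum]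
  exact (Finset.card_filter_le _ _).trans (by simp)

/-- min of row sums over the rows having a `true` in column `j` (or `n₂+1` if none). -/
noncomputable def colRank (M : Fin n₁ → Fin n₂ → Bool) (j : Fin n₂) : ℕ :=
  if h : ((Finset.univ.filter fun i => M i j = true).image (rowSum M)).Nonempty
  then ((Finset.univ.filter fun i => M i j = true).image (rowSum M)).min' h
  else n₂ + 1

lemma colRank_le {M : Fin n₁ → Fin n₂ → Bool} {i : Fin n₁} {j : Fin n₂}
    (h : M i j = true) : colRank M j ≤ rowSum M i := by
  have hmem : rowSum M i ∈ (Finset.univ.filter fun i => M i j = true).image (rowSum M) :=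
    Finset.mem_image_of_mem _ (by simp [h])
  rw [colRank, dif_pos ⟨_, hmem⟩]
  exact Finset.min'_le _ _ hmem

lemma lt_colRank {M : Fin n₁ → Fin n₂ → Bool} (hM : ¬ HasPattern M) {i : Fin n₁}
    {j : Fin n₂} (h : M i j = false) : rowSum M i < colRank M j := by
  rw [colRank]
  split_ifs with hne
  · obtain ⟨i₀, hi₀, hval⟩ := Finset.mem_image.mp (Finset.min'_mem _ hne)
    simp only [mem_filter, mem_univ, true_and] at hi₀
    rw [← hval]
    exact rowSum_lt hM hi₀ h
  · exact lt_of_le_of_lt (rowSum_le M i) (Nat.lt_succ_self n₂)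

noncomputable def phiV (M : Fin n₁ → Fin n₂ → Bool) : (Fin n₁ ⊕ Fin n₂) → ℕ
  | Sum.inl i => 2 * rowSum M i + 2
  | Sum.inr j => 2 * colRank M j + 1

lemma acyclic_of_patternFree {M : Fin n₁ → Fin n₂ → Bool} (hM : ¬ HasPattern M)
    {f : (Fin n₁ ⊕ Fin n₂) → (Fin n₁ ⊕ Fin n₂) → Bool}
    (hf : IsOrientation (completeBipartiteGraph (Fin n₁) (Fin n₂)) f)
    (hmat : ∀ i j, f (Sum.inl i) (Sum.inr j) = M i j) : OrientAcyclic f := by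
  have step : ∀ a b, f a b = true → phiV M b < phiV M a := by
    rintro (i | j) (i' | j') hab
    · rw [hf.2 _ _ (by simp)] at hab; exact absurd hab (by simp)
    · have h : M i j' = true := by rw [← hmat]; exact hab
      have := colRank_le h
      simp only [phiV]; omega
    · have h : M i' j = false := by
        have h5 := hf.1 (Sum.inr j) (Sum.inl i') (by simp)
        rw [hab, hmat] at h5
        cases hM' : M i' j
        · rfl
        · rw [hM'] at h5; simp at h5
      have := lt_colRank hM h
      simp only [phiV]; omega
    · rw [hf.2 _ _ (by simp)] at hab; exact absurd hab (by simp)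
  intro v hv
  have : ∀ a b, Relation.TransGen (fun a b => f a b = true) a b → phiV M b < phiV M a := by
    intro a b h
    induction h with
    | single h => exact step _ _ h
    | tail _ h ih => exact lt_trans (step _ _ h) ih
  exact lt_irrefl _ (this v v hv)

lemma not_acyclic_of_pattern {M : Fin n₁ → Fin n₂ → Bool} (hp : HasPattern M)
    {f : (Fin n₁ ⊕ Fin n₂) → (Fin n₁ ⊕ Fin n₂) → Bool}
    (hf : IsOrientation (completeBipartiteGraph (Fin n₁) (Fin n₂)) f)
    (hmat : ∀ i j, f (Sum.inl i) (Sum.inr j) = M i j) : ¬ OrientAcyclic f := by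
  obtain ⟨i, i', j, j', h1, h2, h3, h4⟩ := hp
  intro hac
  refine hac (Sum.inl i) ?_
  have e1 : f (Sum.inl i) (Sum.inr j) = true := by rw [hmat]; exact h1
  have e2 : f (Sum.inr j) (Sum.inl i') = true := by
    have := hf.1 (Sum.inr j) (Sum.inl i') (by simp)
    rw [this, hmat, h4]; rfl
  have e3 : f (Sum.inl i') (Sum.inr j') = true := by rw [hmat]; exact h3
  have e4 : f (Sum.inr j') (Sum.inl i) = true := by
    have := hf.1 (Sum.inr j') (Sum.inl i) (by simp)
    rw [this, hmat, h2]; rfl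
  exact (((Relation.TransGen.single (r := fun a b => f a b = true) e1).tail e2).tail e3).tail e4

end Aux

section Ryser

variable {n₁ n₂ : ℕ}

lemma card_filter_swap {α : Type*} [Fintype α] [DecidableEq α] {p q : α → Bool} {x y : α}
    (hxy : x ≠ y) (hpx : p x = true) (hpy : p y = false) (hqx : q x = false) (hqy : q y = true)
    (hpq : ∀ b, b ≠ x → b ≠ y → q b = p b) :
    (univ.filter fun b => q b = true).card = (univ.filter fun b => p b = true).card := by
  rw [Finset.card_filter, Finset.card_filter]
  rw [← Finset.sum_erase_add _ _ (Finset.mem_univ x),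
    ← Finset.sum_erase_add _ _ (Finset.mem_univ x)]
  have hy : y ∈ univ.erase x := Finset.mem_erase.mpr ⟨hxy.symm, Finset.mem_univ y⟩
  rw [← Finset.sum_erase_add _ _ hy, ← Finset.sum_erase_add _ _ hy]
  have hS : ∑ b ∈ ((univ : Finset α).erase x).erase y, (if q b = true then 1 else 0) =
      ∑ b ∈ ((univ : Finset α).erase x).erase y, (if p b = true then 1 else 0) := by
    apply Finset.sum_congr rfl
    intro b hb
    simp only [Finset.mem_erase] at hb
    rw [hpq b hb.2.1 hb.1]
  rw [hS, hpx, hpy, hqx, hqy]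
  simp

lemma exists_flip {α : Type*} [Fintype α] [DecidableEq α] {p q : α → Bool}
    (hcard : (univ.filter fun b => p b = true).card = (univ.filter fun b => q b = true).card)
    {x : α} (hx : q x = true) (hx' : p x = false) : ∃ y, p y = true ∧ q y = false := by
  by_contra h
  push_neg at h
  have hsub : (univ.filter fun b => p b = true) ⊆ (univ.filter fun b => q b = true) := by
    intro b hb
    simp only [mem_filter, mem_univ, true_and] at hb ⊢
    cases hq : q b
    · exact absurd hq (h b hb)
    · rfl
  have heq := Finset.eq_of_subset_of_card_le hsub hcard.ge
  have hxmem : x ∈ univ.filter fun b => p b = true := by rw [heq]; simp [hx]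
  simp [hx'] at hxmem

lemma not_lonesum_of_pattern {M : Fin n₁ → Fin n₂ → Bool} (hp : HasPattern M) :
    ¬ IsLonesum M := by
  obtain ⟨i, i', j, j', h1, h2, h3, h4⟩ := hp
  have hii : i ≠ i' := fun h => by rw [h, h4] at h1; exact absurd h1 (by simp)
  have hjj : j ≠ j' := fun h => by rw [h, h2] at h1; exact absurd h1 (by simp)
  intro hl
  set N : Fin n₁ → Fin n₂ → Bool := fun a b =>
    if a = i ∧ b = j then false else if a = i ∧ b = j' then true
    else if a = i' ∧ b = j then true else if a = i' ∧ b = j' then false else M a b with hN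
  have hNij : N i j = false := by simp [hN]
  have hNij' : N i j' = true := by simp [hN, hjj.symm]
  have hNi'j : N i' j = true := by simp [hN, hii.symm]
  have hNi'j' : N i' j' = false := by simp [hN, hii.symm, hjj.symm]
  have hNother : ∀ a b, a ≠ i → a ≠ i' → N a b = M a b := by
    intro a b ha ha'; simp [hN, ha, ha']
  have hNother' : ∀ a b, b ≠ j → b ≠ j' → N a b = M a b := by
    intro a b hb hb'; simp [hN, hb, hb']
  have hrow : ∀ a, rowSum N a = rowSum M a := by
    intro a
    rcases eq_or_ne a i with rfl | hai
    · exact card_filter_swap hjj h1 h2 hNij hNij' (fun b hb hb' => hNother' a b hb hb')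
    rcases eq_or_ne a i' with rfl | hai'
    · exact card_filter_swap hjj.symm h3 h4 hNi'j' hNi'j (fun b hb hb' => hNother' a b hb' hb)
    · unfold rowSum
      congr 1
      apply Finset.filter_congr
      intro b _
      rw [hNother a b hai hai']
  have hcol : ∀ b, colSum N b = colSum M b := by
    intro b
    rcases eq_or_ne b j with rfl | hbj
    · exact card_filter_swap hii h1 h4 hNij hNi'j (fun a ha ha' => hNother a b ha ha')
    rcases eq_or_ne b j' with rfl | hbj'
    · exact card_filter_swap hii.symm h3 h2 hNi'j' hNij' (fun a ha ha' => hNother a b ha' ha)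
    · unfold colSum
      congr 1
      apply Finset.filter_congr
      intro a _
      rw [hNother' a b hbj hbj']
  have := congrFun (congrFun (hl N hrow hcol) i) j
  rw [hNij, h1] at this
  exact absurd this (by simp)

lemma lonesum_of_patternFree {M : Fin n₁ → Fin n₂ → Bool} (hM : ¬ HasPattern M) :
    IsLonesum M := by
  intro N hrow hcol
  by_contra hne
  have stepA : ∃ i j, M i j = true ∧ N i j = false := by
    by_contra h
    push_neg at h
    apply hne
    funext a b
    have hsub : (univ.filter fun b => M a b = true) ⊆ (univ.filter fun b => N a b = true) := by
      intro c hc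
      simp only [mem_filter, mem_univ, true_and] at hc ⊢
      cases hq : N a c
      · exact absurd hq (h a c hc)
      · rfl
    have heq := Finset.eq_of_subset_of_card_le hsub (hrow a).le
    cases hm : M a b
    · cases hn : N a b
      · rfl
      · have hmem : b ∈ univ.filter fun c => N a c = true := by simp [hn]
        rw [← heq] at hmem
        simp [hm] at hmem
    · cases hn : N a b
      · have hmem : b ∈ univ.filter fun c => M a c = true := by simp [hm]
        rw [heq] at hmem
        simp [hn] at hmem
      · rfl
  have key : ∀ k, ∃ (i : Fin n₁) (js : Fin (k+1) → Fin n₂), Function.Injective js ∧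
      (∀ l, M i (js l) = true) ∧ N i (js (Fin.last k)) = false := by
    intro k
    induction k with
    | zero =>
      obtain ⟨i, j, hMij, hNij⟩ := stepA
      exact ⟨i, fun _ => j, fun a b _ => Subsingleton.elim (α := Fin 1) a b, fun _ => hMij, hNij⟩
    | succ k ih =>
      obtain ⟨i, js, hinj, hMall, hNlast⟩ := ih
      obtain ⟨j', hNj', hMj'⟩ :=
        exists_flip (p := N i) (q := M i) (hrow i) (hMall (Fin.last k)) hNlast
      obtain ⟨i', hMi', hNi'⟩ :=
        exists_flip (p := fun a => M a j') (q := fun a => N a j') ((hcol j').symm) hNj' hMj'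
      have hMi'all : ∀ l : Fin (k+1), M i' (js l) = true := by
        intro l
        by_contra hc
        exact hM ⟨i, i', js l, j', hMall l, hMj', hMi', by simpa using hc⟩
      refine ⟨i', Fin.snoc js j', ?_, ?_, ?_⟩
      · intro a b hab
        rcases Fin.eq_castSucc_or_eq_last a with ⟨a', rfl⟩ | rfl <;>
          rcases Fin.eq_castSucc_or_eq_last b with ⟨b', rfl⟩ | rfl
        · simp only [Fin.snoc_castSucc] at hab
          exact congrArg Fin.castSucc (hinj hab)
        · rw [Fin.snoc_castSucc, Fin.snoc_last] at hab
          exact absurd (hab ▸ hMall a') (by simp [hMj'])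
        · rw [Fin.snoc_last, Fin.snoc_castSucc] at hab
          exact absurd (hab.symm ▸ hMall b') (by simp [hMj'])
        · rfl
      · intro l
        rcases Fin.eq_castSucc_or_eq_last l with ⟨l', rfl⟩ | rfl
        · rw [Fin.snoc_castSucc]; exact hMi'all l'
        · rw [Fin.snoc_last]; exact hMi'
      · rw [Fin.snoc_last]; exact hNi'
  obtain ⟨i, js, hinj, -, -⟩ := key n₂
  have hcard := Fintype.card_le_of_injective js hinj
  simp only [Fintype.card_fin] at hcard
  omega

end Ryser
section Main

variable {n₁ n₂ : ℕ}

def orientOf (M : Fin n₁ → Fin n₂ → Bool) :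
    (Fin n₁ ⊕ Fin n₂) → (Fin n₁ ⊕ Fin n₂) → Bool
  | Sum.inl i, Sum.inr j => M i j
  | Sum.inr j, Sum.inl i => !M i j
  | _, _ => false

lemma orientOf_isOrientation (M : Fin n₁ → Fin n₂ → Bool) :
    IsOrientation (completeBipartiteGraph (Fin n₁) (Fin n₂)) (orientOf M) := by
  constructor
  · rintro (i | j) (i' | j') hadj
    · simp at hadj
    · show M i j' = !(!M i j'); simp
    · rfl
    · simp at hadj
  · rintro (i | j) (i' | j') hadj
    · rfl
    · simp at hadj
    · simp at hadj
    · rfl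


/-- The number of acyclic orientations of `K_{n₁,n₂}` equals the number of `n₁ × n₂`
lonesum matrices. -/
theorem card_acyclicOrientations_eq_card_lonesum (n₁ n₂ : ℕ) (h₁ : 1 ≤ n₁) (h₂ : 1 ≤ n₂) :
    numAcyclicOrientations (completeBipartiteGraph (Fin n₁) (Fin n₂)) =
      Nat.card {M : Fin n₁ → Fin n₂ → Bool // IsLonesum M} := by
  refine Nat.card_congr
    ⟨fun x => ⟨fun i j => x.1 (Sum.inl i) (Sum.inr j),
      lonesum_of_patternFree (fun hp => not_acyclic_of_pattern hp x.2.1 (fun _ _ => rfl) x.2.2)⟩,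
    fun y => ⟨orientOf y.1, orientOf_isOrientation y.1,
      acyclic_of_patternFree (fun hp => not_lonesum_of_pattern hp y.2)
        (orientOf_isOrientation y.1) (fun _ _ => rfl)⟩,
    ?_, ?_⟩
  · rintro ⟨f, hf, hac⟩
    apply Subtype.ext
    funext u v
    match u, v with
    | Sum.inl a, Sum.inl b => exact (hf.2 _ _ (by simp)).symm
    | Sum.inl a, Sum.inr b => rfl
    | Sum.inr a, Sum.inl b =>
      exact (hf.1 (Sum.inr a) (Sum.inl b) (by simp)).symm
    | Sum.inr a, Sum.inr b => exact (hf.2 _ _ (by simp)).symm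
  · rintro ⟨Mm, hMm⟩
    rfl

end Main
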